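/- If K ⊆ ℝ² is compact and A ⊆ ℝ² is open, then the intersection A ∩ K is strongly good: for every surjective isometry f : ℝ² → ℝ² with f(A ∩ K) ⊆ A ∩ K, one has f(A ∩ K) = A ∩ K. -/

import Mathlib

/-!
An isometry mapping a compact set into itself maps it onto itself, since every orbit in the
compact set returns arbitrarily close to its starting point. Applied to `f` and the compact closure
`C` of `A ∩ K`, this gives `f '' C = C`. Since `f` maps `A ∩ K = A ∩ C` into `A`, the inverse
isometry maps the compact set `C \ A` into itself, so `f '' (C \ A) = C \ A` as well, and
`A ∩ K = C \ (C \ A)` is mapped onto itself.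
-/

open Set Function

abbrev Plane := EuclideanSpace ℝ (Fin 2)

/-- Geometric equality: some surjective isometry of the plane maps `S₁` onto `S₂`. -/
def GeomEq (S₁ S₂ : Set Plane) : Prop :=
  ∃ f : Plane → Plane, Isometry f ∧ Function.Surjective f ∧ f '' S₁ = S₂

/-- `S₁` is equal to or smaller than `S₂`: some surjective isometry maps `S₁` into `S₂`. -/
def GeomLe (S₁ S₂ : Set Plane) : Prop :=
  ∃ f : Plane → Plane, Isometry f ∧ Function.Surjective f ∧ f '' S₁ ⊆ S₂

/-- A figure is good if `A ≤ B` and `B ≤ A` imply `A ≈ B` for every figure `B`. -/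
def IsGood (A : Set Plane) : Prop :=
  ∀ B : Set Plane, GeomLe A B → GeomLe B A → GeomEq A B

/-- A figure is strongly good if every surjective isometry mapping it into itself maps it onto itself. -/
def IsStronglyGood (A : Set Plane) : Prop :=
  ∀ f : Plane → Plane, Isometry f → Function.Surjective f → f '' A ⊆ A → f '' A = A

theorem Isometry.iterate {X : Type*} [PseudoEMetricSpace X] {f : X → X} (hf : Isometry f) :
    ∀ n, Isometry f^[n]
  | 0 => isometry_id
  | n + 1 => (hf.iterate n).comp hf

theorem inter_closure_inter_eq_of_isClosed {X : Type*} [TopologicalSpace X] {A K : Set X}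
    (hK : IsClosed K) : A ∩ closure (A ∩ K) = A ∩ K :=
  subset_antisymm (fun _ ⟨hA, hc⟩ => ⟨hA, closure_minimal inter_subset_right hK hc⟩)
    (subset_inter inter_subset_left subset_closure)

section

variable {X : Type*} [MetricSpace X]

theorem Isometry.exists_dist_iterate_lt {f : X → X} (hf : Isometry f) {K : Set X}
    (hK : IsCompact K) (hfK : MapsTo f K K) {x : X} (hx : x ∈ K) {ε : ℝ} (hε : 0 < ε) :
    ∃ m, 0 < m ∧ dist (f^[m] x) x < ε := by
  obtain ⟨_, -, φ, hφ, hlim⟩ := hK.tendsto_subseq fun n => hfK.iterate n hx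
  obtain ⟨N, hN⟩ := Metric.cauchySeq_iff.1 hlim.cauchySeq ε hε
  have hlt : φ N < φ (N + 1) := hφ N.lt_succ_self
  refine ⟨φ (N + 1) - φ N, by omega, ?_⟩
  have hsplit : f^[φ (N + 1)] x = f^[φ N] (f^[φ (N + 1) - φ N] x) := by
    rw [← iterate_add_apply, Nat.add_sub_cancel' hlt.le]
  have := hN (N + 1) N.le_succ N le_rfl
  rwa [comp_apply, comp_apply, hsplit, (hf.iterate (φ N)).dist_eq] at this

theorem Isometry.image_eq_of_mapsTo {f : X → X} (hf : Isometry f) {K : Set X}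
    (hK : IsCompact K) (hfK : MapsTo f K K) : f '' K = K := by
  refine (mapsTo_iff_image_subset.1 hfK).antisymm fun x hx => ?_
  rw [← (hK.image hf.continuous).isClosed.closure_eq, Metric.mem_closure_iff]
  intro ε hε
  obtain ⟨m, hm, hdist⟩ := hf.exists_dist_iterate_lt hK hfK hx hε
  obtain ⟨k, rfl⟩ := Nat.exists_eq_add_one_of_ne_zero hm.ne'
  refine ⟨f^[k + 1] x, ?_, by rwa [dist_comm]⟩
  rw [iterate_succ_apply']
  exact mem_image_of_mem f (hfK.iterate k hx)

theorem IsometryEquiv.image_inter_eq_of_subset (f : X ≃ᵢ X) {A K : Set X} (hA : IsOpen A)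
    (hK : IsCompact K) (h : f '' (A ∩ K) ⊆ A ∩ K) : f '' (A ∩ K) = A ∩ K := by
  set C := closure (A ∩ K)
  have hAC : A ∩ C = A ∩ K := inter_closure_inter_eq_of_isClosed hK.isClosed
  have hC : IsCompact C := hK.closure_of_subset inter_subset_right
  have hfC : f '' C = C :=
    f.isometry.image_eq_of_mapsTo hC ((mapsTo_iff_image_subset.2 h).closure f.continuous)
  have hsymm : MapsTo f.symm (C \ A) (C \ A) := by
    rintro b ⟨hbC, hbA⟩
    obtain ⟨y, hyC, rfl⟩ : b ∈ f '' C := hfC.symm ▸ hbC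
    rw [f.symm_apply_apply]
    exact ⟨hyC, fun hyA => hbA (h ⟨y, hAC ▸ ⟨hyA, hyC⟩, rfl⟩).1⟩
  have hfCA : f '' (C \ A) = C \ A := by
    nth_rw 1 [← f.symm.isometry.image_eq_of_mapsTo (hC.diff hA) hsymm]
    exact f.toEquiv.image_symm_image _
  have hAK : A ∩ K = C \ (C \ A) := by
    rw [Set.sdiff_sdiff_right_self, inter_comm C A, hAC]
  rw [hAK, image_sdiff f.injective, hfC, hfCA]

end

/-- Proposition 1.10 (with the remark that boundedness of `A` is not needed):
the intersection of a compact set with an open set is strongly good. -/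
theorem isStronglyGood_inter (K A : Set Plane) (hK : IsCompact K)
    (hAo : IsOpen A) : IsStronglyGood (A ∩ K) := fun f hf hsurj =>
  (IsometryEquiv.mk' f (surjInv hsurj) (rightInverse_surjInv hsurj) hf).image_inter_eq_of_subset
    hAo hK
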